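/- The family γ = (γ_Λ) satisfies the consistency condition: whenever Λ ⊆ Δ are nonempty finite subsets of ℤ^d, then for every Borel set A ⊆ X and every x ∈ X, ∫_X γ_Λ(A|y) γ_Δ(dy|x) = γ_Δ(A|x). -/

import Mathlib

open MeasureTheory Filter Topology

/-- The full shift configuration space `𝒜^{ℤ^d}`. -/
abbrev Config (d : ℕ) (A : Type*) := (Fin d → ℤ) → A

/-- The shift action of `ℤ^d`: `(T^k x)_i = x_{i+k}`. -/
def shift {d : ℕ} {A : Type*} (k : Fin d → ℤ) (x : Config d A) : Config d A :=
  fun i => x (i + k)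

/-- The ℓ∞ norm of a lattice point, `‖k‖_∞ = max_i |k_i|`. -/
def normInf {d : ℕ} (k : Fin d → ℤ) : ℕ :=
  Finset.univ.sup fun i => (k i).natAbs

/-- The box `Λ_N = {k : ‖k‖_∞ ≤ N}` as a finset. -/
noncomputable def boxF (d N : ℕ) : Finset (Fin d → ℤ) :=
  Finset.Icc (fun _ => -(N : ℤ)) (fun _ => (N : ℤ))

/-- The `n`-th variation of `f` on a subshift `X`:
`δ_n(f) = sup {|f x - f y| : x, y ∈ X, x_{Λ_n} = y_{Λ_n}}`. -/
noncomputable def deltaVar {d : ℕ} {A : Type*} (X : Set (Config d A))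
    (f : Config d A → ℝ) (n : ℕ) : ℝ :=
  sSup {r : ℝ | ∃ x ∈ X, ∃ y ∈ X,
    (∀ k : Fin d → ℤ, normInf k ≤ n → x k = y k) ∧ r = |f x - f y|}

/-- `f` is bounded on `X`. -/
def BoundedOn {d : ℕ} {A : Type*} (X : Set (Config d A)) (f : Config d A → ℝ) : Prop :=
  ∃ C : ℝ, ∀ x ∈ X, |f x| ≤ C

/-- Membership in `SV_d(X)`: bounded with `Σ_{n ≥ 1} n^{d-1} δ_n(f) < ∞`. -/
def MemSV (d : ℕ) {A : Type*} (X : Set (Config d A)) (f : Config d A → ℝ) : Prop :=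
  BoundedOn X f ∧ Summable fun n : ℕ => ((n : ℝ) + 1) ^ (d - 1) * deltaVar X f (n + 1)

/-- The sup norm of `f` over `X`. -/
noncomputable def supNormOn {d : ℕ} {A : Type*} (X : Set (Config d A))
    (f : Config d A → ℝ) : ℝ :=
  sSup {r : ℝ | ∃ x ∈ X, r = |f x|}

/-- The `SV_d` norm: `‖f‖_{SV_d} = ‖f‖_∞ + Σ_{n ≥ 1} n^{d-1} δ_n(f)`. -/
noncomputable def svNorm (d : ℕ) {A : Type*} (X : Set (Config d A))
    (f : Config d A → ℝ) : ℝ :=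
  supNormOn X f + ∑' n : ℕ, ((n : ℝ) + 1) ^ (d - 1) * deltaVar X f (n + 1)

/-- The Gibbs relation `𝔗`: pairs of points of `X` that agree outside a finite set. -/
def gibbsRel {d : ℕ} {A : Type*} (X : Set (Config d A)) :
    Set (Config d A × Config d A) :=
  {p | p.1 ∈ X ∧ p.2 ∈ X ∧ ∃ Λ : Finset (Fin d → ℤ), ∀ k ∉ Λ, p.1 k = p.2 k}

/-- The cocycle `φ_f(x,y) = Σ_{k ∈ ℤ^d} (f(T^k y) - f(T^k x))` (unordered sum). -/
noncomputable def phiF {d : ℕ} {A : Type*} (f : Config d A → ℝ)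
    (x y : Config d A) : ℝ :=
  ∑' k : Fin d → ℤ, (f (shift k y) - f (shift k x))

/-- Membership in `𝓕(X)`: homeomorphisms of `X` changing only finitely many coordinates,
uniformly. -/
def memF {d : ℕ} {A : Type*} [TopologicalSpace A] (X : Set (Config d A))
    (φ : ↥X ≃ₜ ↥X) : Prop :=
  ∃ n : ℕ, 1 ≤ n ∧ ∀ x : ↥X, ∀ k : Fin d → ℤ, n < normInf k → (φ x).1 k = x.1 k

/-- `𝓕_n(X)`. -/
def Fn {d : ℕ} {A : Type*} [TopologicalSpace A] (X : Set (Config d A)) (n : ℕ) :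
    Set (↥X ≃ₜ ↥X) :=
  {φ | (∀ x : ↥X, ∀ k : Fin d → ℤ, n < normInf k → (φ x).1 k = x.1 k) ∧
    ∀ x y : ↥X,
      ((∀ k : Fin d → ℤ, normInf k ≤ n → x.1 k = y.1 k) ↔
        (∀ k : Fin d → ℤ, normInf k ≤ n → (φ x).1 k = (φ y).1 k))}

/-- The configuration `ω x_{Λ^c}`: equal to `ω` on `Λ` and to `x` off `Λ`. -/
def patch {d : ℕ} {A : Type*} (Λ : Finset (Fin d → ℤ)) (ω : {k // k ∈ Λ} → A)
    (x : Config d A) : Config d A :=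
  fun k => if h : k ∈ Λ then ω ⟨k, h⟩ else x k

/-- `f_n = Σ_{i ∈ Λ_n} f ∘ T^i`. -/
noncomputable def fnSum (d : ℕ) {A : Type*} (f : Config d A → ℝ) (n : ℕ)
    (z : Config d A) : ℝ :=
  ∑ i ∈ boxF d n, f (shift i z)

/-- The σ-algebra `𝓕_Δ` on `X`, generated by the coordinate projections `x ↦ x_i`, `i ∈ Δ`. -/
def cylSigma {d : ℕ} {A : Type*} [MeasurableSpace A] (X : Set (Config d A))
    (Δ : Set (Fin d → ℤ)) : MeasurableSpace ↥X :=
  MeasurableSpace.comap (fun (x : ↥X) (i : ↥Δ) => x.1 i.1) MeasurableSpace.pi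

/-- `μ` is a Gibbs measure for `f`: `(φ_f, 𝔗)`-conformal. -/
def IsGibbs (d : ℕ) {A : Type*} [MeasurableSpace A] (X : Set (Config d A))
    (f : Config d A → ℝ) (μ : Measure ↥X) : Prop :=
  ∀ V W : ↥X → ↥X, Measurable V → Measurable W →
    (∀ x, W (V x) = x) → (∀ x, V (W x) = x) →
    (∀ x : ↥X, ((x.1, (V x).1) ∈ gibbsRel X)) →
    (Measure.map V μ ≪ μ ∧
      ∀ᵐ x ∂μ, (Measure.map V μ).rnDeriv μ x
        = ENNReal.ofReal (Real.exp (phiF f x.1 (W x).1)))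

/-- `μ` is a topological Gibbs measure for `f`: `(φ_f|_{𝔗⁰}, 𝔗⁰)`-conformal. -/
def IsTopGibbs (d : ℕ) {A : Type*} [TopologicalSpace A] [MeasurableSpace A]
    (X : Set (Config d A)) (f : Config d A → ℝ) (μ : Measure ↥X) : Prop :=
  ∀ φ : ↥X ≃ₜ ↥X, memF X φ →
    (Measure.map (⇑φ) μ ≪ μ ∧
      ∀ᵐ x ∂μ, (Measure.map (⇑φ) μ).rnDeriv μ x
        = ENNReal.ofReal (Real.exp (phiF f x.1 (φ.symm x).1)))

/-- Finite-volume Gibbsian ratios defining the kernel `γ_Λ`. -/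
noncomputable def gammaFn (d : ℕ) {A : Type*} [Fintype A] (X : Set (Config d A))
    (f : Config d A → ℝ) (Λ : Finset (Fin d → ℤ)) (S : Set ↥X) (x : Config d A)
    (n : ℕ) : ℝ :=
  (∑ ω : {k // k ∈ Λ} → A,
      (Subtype.val '' S).indicator (fun z => Real.exp (fnSum d f n z)) (patch Λ ω x)) /
  (∑ η : {k // k ∈ Λ} → A,
      X.indicator (fun z => Real.exp (fnSum d f n z)) (patch Λ η x))

/-- The kernel `γ_Λ(S | x)`, defined as the limit of the finite-volume ratios. -/
noncomputable def gamma (d : ℕ) {A : Type*} [Fintype A] (X : Set (Config d A))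
    (f : Config d A → ℝ) (Λ : Finset (Fin d → ℤ)) (S : Set ↥X) (x : Config d A) : ℝ :=
  limUnder atTop (gammaFn d X f Λ S x)

/-- `X` is a subshift of finite type. -/
def IsSFT {d : ℕ} {A : Type*} (X : Set (Config d A)) : Prop :=
  ∃ n : ℕ, 1 ≤ n ∧ ∃ F : Set ({k : Fin d → ℤ // normInf k ≤ n} → A),
    X = {x : Config d A |
      ∀ l : Fin d → ℤ, (fun k : {k : Fin d → ℤ // normInf k ≤ n} => shift l x k.1) ∉ F}

/-- The topological Gibbs relation `𝔗⁰`. -/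
def topGibbsRel {d : ℕ} {A : Type*} [TopologicalSpace A] (X : Set (Config d A)) :
    Set (Config d A × Config d A) :=
  {p | ∃ (hx : p.1 ∈ X) (φ : ↥X ≃ₜ ↥X), memF X φ ∧ (φ ⟨p.1, hx⟩).1 = p.2}

/-- `f` is a local function on `X`. -/
def IsLocal {d : ℕ} {A : Type*} (X : Set (Config d A)) (f : Config d A → ℝ) : Prop :=
  ∃ Λ : Finset (Fin d → ℤ), ∀ x ∈ X, ∀ y ∈ X, (∀ k ∈ Λ, x k = y k) → f x = f y

/-!
For fixed `n` the finite-volume ratios are exactly consistent: summing over the configurations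
on `Δ` by first summing over their part on `Λ` is a finite double count. If `z` and `y` agree
outside `Λ_R`, then `T^i z` and `T^i y` agree on `Λ_t` once `‖i‖_∞ > R + t`, and only
`O(t^{d-1})` sites have `‖i‖_∞ = R + t + 1`; so the summability of `n^{d-1} δ_n(f)` makes
`f_n(z) - f_n(y)` converge to `φ_f(y, z)`. Hence every ratio converges and the identity passes to
the limit. Finally `γ_Δ(·|x)` is carried by the finitely many points `ω x_{Δᶜ}`, so the integral
is a finite sum.
-/

open Finset

section Boxes

variable {d : ℕ}

theorem normInf_le_iff {k : Fin d → ℤ} {n : ℕ} : normInf k ≤ n ↔ ∀ i, (k i).natAbs ≤ n := by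
  simp [normInf, Finset.sup_le_iff]

theorem mem_boxF {N : ℕ} {k : Fin d → ℤ} : k ∈ boxF d N ↔ normInf k ≤ N := by
  simp only [boxF, mem_Icc, normInf_le_iff, Pi.le_def, ← forall_and]
  exact forall_congr' fun i => by omega

theorem boxF_mono : Monotone (boxF d) := fun _ _ hmn _ hk =>
  mem_boxF.2 ((mem_boxF.1 hk).trans hmn)

theorem card_boxF (N : ℕ) : #(boxF d N) = (2 * N + 1) ^ d := by
  rw [boxF, Pi.card_Icc]
  simp only [Int.card_Icc, prod_const, card_univ, Fintype.card_fin]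
  congr 1
  omega

theorem card_boxF_succ_sdiff_le (N : ℕ) :
    #(boxF d (N + 1) \ boxF d N) ≤ 2 * d * (2 * N + 3) ^ (d - 1) := by
  rw [card_sdiff_of_subset (boxF_mono N.le_succ), card_boxF, card_boxF]
  grind [abs_pow_sub_pow_le (α := ℤ) (2 * N + 3) (2 * N + 1) d]

theorem summable_of_le_sphere {g : (Fin d → ℤ) → ℝ} {b : ℕ → ℝ} (M : ℕ) (hg : ∀ i, 0 ≤ g i)
    (hb : ∀ t, 0 ≤ b t) (hsum : Summable fun t : ℕ => ((t : ℝ) + 1) ^ (d - 1) * b t)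
    (hgb : ∀ i t, normInf i = M + t + 1 → g i ≤ b t) : Summable g := by
  set c : ℝ := 2 * d * (2 * M + 3) ^ (d - 1)
  have hsphere (t : ℕ) : ∑ i ∈ boxF d (M + t + 1) \ boxF d (M + t), g i ≤
      c * (((t : ℝ) + 1) ^ (d - 1) * b t) := by
    have hcard : (#(boxF d (M + t + 1) \ boxF d (M + t)) : ℝ) ≤ c * ((t : ℝ) + 1) ^ (d - 1) :=
      calc (#(boxF d (M + t + 1) \ boxF d (M + t)) : ℝ)
          ≤ 2 * d * (2 * ((M : ℝ) + t) + 3) ^ (d - 1) := by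
            exact_mod_cast card_boxF_succ_sdiff_le (M + t)
        _ ≤ 2 * d * ((2 * M + 3) * ((t : ℝ) + 1)) ^ (d - 1) := by gcongr; nlinarith
        _ = c * ((t : ℝ) + 1) ^ (d - 1) := by rw [mul_pow]; ring
    calc ∑ i ∈ boxF d (M + t + 1) \ boxF d (M + t), g i
        ≤ #(boxF d (M + t + 1) \ boxF d (M + t)) • b t := by
          refine sum_le_card_nsmul _ _ _ fun i hi => hgb i t ?_
          simp only [Finset.mem_sdiff, mem_boxF] at hi
          omega
      _ ≤ c * ((t : ℝ) + 1) ^ (d - 1) * b t := by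
          rw [nsmul_eq_mul]
          exact mul_le_mul_of_nonneg_right hcard (hb t)
      _ = c * (((t : ℝ) + 1) ^ (d - 1) * b t) := mul_assoc ..
  have hbox (n : ℕ) : ∑ i ∈ boxF d (M + n), g i ≤
      ∑ i ∈ boxF d M, g i + c * ∑' t : ℕ, ((t : ℝ) + 1) ^ (d - 1) * b t := by
    rw [sum_eq_sum_range_sdiff (fun n => boxF d (M + n)) fun _ _ h => boxF_mono (by omega),
      add_zero]
    refine add_le_add_right ?_ _
    calc ∑ t ∈ range n, ∑ i ∈ boxF d (M + (t + 1)) \ boxF d (M + t), g i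
        ≤ ∑ t ∈ range n, c * (((t : ℝ) + 1) ^ (d - 1) * b t) := sum_le_sum fun t _ => hsphere t
      _ ≤ c * ∑' t : ℕ, ((t : ℝ) + 1) ^ (d - 1) * b t := by
          rw [← mul_sum]
          gcongr
          exact hsum.sum_le_tsum _ fun t _ => mul_nonneg (by positivity) (hb t)
  exact summable_of_sum_le hg fun u =>
    (sum_le_sum_of_subset_of_nonneg (fun i hi => mem_boxF.2 ((le_sup hi).trans le_add_self))
      fun i _ _ => hg i).trans (hbox (u.sup normInf))

end Boxes

section Variation

variable {d : ℕ} {A : Type*} {X : Set (Config d A)} {f : Config d A → ℝ}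

theorem abs_sub_le_deltaVar (hf : BoundedOn X f) {n : ℕ} {x y : Config d A} (hx : x ∈ X)
    (hy : y ∈ X) (h : ∀ k, normInf k ≤ n → x k = y k) : |f x - f y| ≤ deltaVar X f n := by
  obtain ⟨C, hC⟩ := hf
  refine le_csSup ⟨C + C, ?_⟩ ⟨x, hx, y, hy, h, rfl⟩
  rintro _ ⟨x', hx', y', hy', -, rfl⟩
  exact (abs_sub _ _).trans (add_le_add (hC x' hx') (hC y' hy'))

theorem deltaVar_nonneg (hf : BoundedOn X f) {x : Config d A} (hx : x ∈ X) (n : ℕ) :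
    0 ≤ deltaVar X f n := by
  simpa using abs_sub_le_deltaVar (n := n) hf hx hx fun _ _ => rfl

theorem shift_apply_eq_of_eqOn_compl {Λ : Finset (Fin d → ℤ)} {z y : Config d A}
    (h : ∀ k ∉ Λ, z k = y k) {i : Fin d → ℤ} {n : ℕ} (hi : Λ.sup normInf + n < normInf i) :
    ∀ k, normInf k ≤ n → shift i z k = shift i y k := by
  intro k hk
  refine h _ fun hmem => ?_
  have hki : normInf (k + i) ≤ Λ.sup normInf := le_sup hmem
  rw [normInf_le_iff] at hk hki
  have : normInf i ≤ Λ.sup normInf + n := normInf_le_iff.2 fun j => by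
    have := hk j
    have := hki j
    simp only [Pi.add_apply] at this
    omega
  omega

variable {Λ : Finset (Fin d → ℤ)} {z y : Config d A}

theorem summable_sub_shift (hf : MemSV d X f) (hinv : ∀ k, ∀ x ∈ X, shift k x ∈ X)
    (hz : z ∈ X) (hy : y ∈ X) (h : ∀ k ∉ Λ, z k = y k) :
    Summable fun i => f (shift i z) - f (shift i y) :=
  .of_abs <| summable_of_le_sphere (Λ.sup normInf + 1) (fun _ => abs_nonneg _)
    (fun t => deltaVar_nonneg hf.1 hz (t + 1)) hf.2 fun i t hi =>
      abs_sub_le_deltaVar hf.1 (hinv i z hz) (hinv i y hy)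
        (shift_apply_eq_of_eqOn_compl h (by omega))

theorem tendsto_fnSum_sub_fnSum (hf : MemSV d X f) (hinv : ∀ k, ∀ x ∈ X, shift k x ∈ X)
    (hz : z ∈ X) (hy : y ∈ X) (h : ∀ k ∉ Λ, z k = y k) :
    Tendsto (fun n => fnSum d f n z - fnSum d f n y) atTop (𝓝 (phiF f y z)) := by
  have hbox : Tendsto (boxF d) atTop atTop :=
    tendsto_atTop_finset_of_monotone boxF_mono fun i => ⟨normInf i, mem_boxF.2 le_rfl⟩
  simpa [fnSum, phiF, Function.comp_def, sum_sub_distrib] using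
    (summable_sub_shift hf hinv hz hy h).hasSum.comp hbox

end Variation

section Patch

variable {d : ℕ} {A : Type*} {Λ Δ : Finset (Fin d → ℤ)}

theorem patch_apply_of_notMem (ω : {k // k ∈ Λ} → A) (y : Config d A) {k : Fin d → ℤ}
    (hk : k ∉ Λ) : patch Λ ω y k = y k := dif_neg hk

theorem patch_self (y : Config d A) : patch Λ (fun k => y k) y = y := by
  funext k
  unfold patch
  split <;> rfl

theorem patch_patch (η η' : {k // k ∈ Λ} → A) (y : Config d A) :
    patch Λ η (patch Λ η' y) = patch Λ η y := by
  funext k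
  unfold patch
  split <;> simp_all

theorem patch_injective (x : Config d A) :
    Function.Injective fun ω : {k // k ∈ Λ} → A => patch Λ ω x := fun ω ω' h =>
  funext fun k => by simpa only [patch, dif_pos k.2] using congrFun h k.1

def overwrite (ω : {k // k ∈ Δ} → A) (η : {k // k ∈ Λ} → A) : {k // k ∈ Δ} → A :=
  fun k => if h : k.1 ∈ Λ then η ⟨k.1, h⟩ else ω k

theorem patch_overwrite (hΛΔ : Λ ⊆ Δ) (ω : {k // k ∈ Δ} → A) (η : {k // k ∈ Λ} → A)
    (x : Config d A) : patch Δ (overwrite ω η) x = patch Λ η (patch Δ ω x) := by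
  funext k
  by_cases hΛ : k ∈ Λ
  · simp [patch, overwrite, hΛ, hΛΔ hΛ]
  · by_cases hΔ : k ∈ Δ <;> simp [patch, overwrite, hΛ, hΔ]

theorem sum_sum_patch_comm [Fintype A] (hΛΔ : Λ ⊆ Δ) (x : Config d A)
    (F : Config d A → Config d A → ℝ) :
    ∑ ω : {k // k ∈ Δ} → A, ∑ η : {k // k ∈ Λ} → A,
        F (patch Δ ω x) (patch Λ η (patch Δ ω x)) =
      ∑ ω : {k // k ∈ Δ} → A, ∑ η : {k // k ∈ Λ} → A,
        F (patch Λ η (patch Δ ω x)) (patch Δ ω x) := by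
  let σ (p : ({k // k ∈ Δ} → A) × ({k // k ∈ Λ} → A)) :
      ({k // k ∈ Δ} → A) × ({k // k ∈ Λ} → A) :=
    (overwrite p.1 p.2, fun l => p.1 ⟨l.1, hΛΔ l.2⟩)
  have hσ : Function.Involutive σ := by
    rintro ⟨ω, η⟩
    ext k
    · by_cases hk : k.1 ∈ Λ <;> simp [σ, overwrite, hk]
    · simp [σ, overwrite]
  rw [← Fintype.sum_prod_type', ← Fintype.sum_prod_type',
    ← Equiv.sum_comp (Function.Involutive.toPerm σ hσ)]
  refine Fintype.sum_congr _ _ fun p => ?_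
  have hp : patch Λ (σ p).2 (patch Δ (σ p).1 x) = patch Δ p.1 x := by
    rw [← patch_overwrite hΛΔ]
    exact congrArg (fun q => patch Δ q.1 x) (hσ p)
  simp only [Function.Involutive.coe_toPerm, hp]
  rw [patch_overwrite hΛΔ]

end Patch

section Kernel

variable {d : ℕ} {A : Type*} [Fintype A] {X : Set (Config d A)} {f : Config d A → ℝ}
  {Λ Δ : Finset (Fin d → ℤ)} {S : Set ↥X}

theorem sum_indicator_patch_pos {w : Config d A → ℝ} (hw : ∀ z, 0 < w z) {y : Config d A}
    (hy : y ∈ X) : 0 < ∑ η : {k // k ∈ Λ} → A, X.indicator w (patch Λ η y) :=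
  sum_pos' (fun _ _ => Set.indicator_nonneg (fun z _ => (hw z).le) _)
    ⟨fun k => y k, mem_univ _, by rw [patch_self, Set.indicator_of_mem hy]; exact hw y⟩

theorem gammaFn_eq_zero_of_forall_patch_notMem {x : Config d A}
    (h : ∀ ω, patch Λ ω x ∉ Subtype.val '' S) (n : ℕ) :
    gammaFn d X f Λ S x n = 0 := by
  simp [gammaFn, Set.indicator_of_notMem (h _)]

theorem gamma_eq_zero_of_forall_patch_notMem {x : Config d A}
    (h : ∀ ω, patch Λ ω x ∉ Subtype.val '' S) :
    gamma d X f Λ S x = 0 := by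
  rw [gamma, funext (gammaFn_eq_zero_of_forall_patch_notMem h)]
  exact tendsto_const_nhds.limUnder_eq

theorem gammaFn_eq_div_exp_sub (y : Config d A) (n : ℕ) :
    gammaFn d X f Λ S y n =
      (∑ η : {k // k ∈ Λ} → A, (Subtype.val '' S).indicator
          (fun z => Real.exp (fnSum d f n z - fnSum d f n y)) (patch Λ η y)) /
        ∑ η : {k // k ∈ Λ} → A,
          X.indicator (fun z => Real.exp (fnSum d f n z - fnSum d f n y)) (patch Λ η y) := by
  have h (s : Set (Config d A)) (z : Config d A) :
      s.indicator (fun z => Real.exp (fnSum d f n z)) z =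
        s.indicator (fun z => Real.exp (fnSum d f n z - fnSum d f n y)) z *
          Real.exp (fnSum d f n y) := by
    rw [← Set.indicator_mul_const]
    simp_rw [← Real.exp_add, sub_add_cancel]
  simp_rw [gammaFn, h, ← sum_mul]
  exact mul_div_mul_right _ _ (Real.exp_ne_zero _)

theorem tendsto_gammaFn (hf : MemSV d X f) (hinv : ∀ k, ∀ x ∈ X, shift k x ∈ X)
    {y : Config d A} (hy : y ∈ X) (S : Set ↥X) :
    Tendsto (gammaFn d X f Λ S y) atTop (𝓝 (gamma d X f Λ S y)) := by
  have hterm (s : Set (Config d A)) (hs : s ⊆ X) (η : {k // k ∈ Λ} → A) :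
      Tendsto (fun n => s.indicator (fun z => Real.exp (fnSum d f n z - fnSum d f n y))
        (patch Λ η y)) atTop (𝓝 (s.indicator (fun z => Real.exp (phiF f y z)) (patch Λ η y))) := by
    by_cases h : patch Λ η y ∈ s
    · simp only [Set.indicator_of_mem h]
      exact (tendsto_fnSum_sub_fnSum hf hinv (hs h) hy fun k hk =>
        patch_apply_of_notMem η y hk).rexp
    · simp only [Set.indicator_of_notMem h]
      exact tendsto_const_nhds
  have hden : 0 < ∑ η : {k // k ∈ Λ} → A,
      X.indicator (fun z => Real.exp (phiF f y z)) (patch Λ η y) :=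
    sum_indicator_patch_pos (fun _ => Real.exp_pos _) hy
  apply tendsto_nhds_limUnder
  rw [funext (gammaFn_eq_div_exp_sub y)]
  exact ⟨_, (tendsto_finsetSum _ fun η _ => hterm _ (Subtype.coe_image_subset X S) η).div
    (tendsto_finsetSum _ fun η _ => hterm X subset_rfl η) hden.ne'⟩

theorem sum_indicator_mul_gammaFn (hΛΔ : Λ ⊆ Δ) (x : Config d A) (n : ℕ) :
    ∑ ω : {k // k ∈ Δ} → A, X.indicator (fun z => Real.exp (fnSum d f n z)) (patch Δ ω x) *
        gammaFn d X f Λ S (patch Δ ω x) n =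
      ∑ ω : {k // k ∈ Δ} → A,
        (Subtype.val '' S).indicator (fun z => Real.exp (fnSum d f n z)) (patch Δ ω x) := by
  set w := fun z => Real.exp (fnSum d f n z)
  set Z := fun y => ∑ η : {k // k ∈ Λ} → A, X.indicator w (patch Λ η y)
  have hZ (η : {k // k ∈ Λ} → A) (y : Config d A) : Z (patch Λ η y) = Z y := by
    simp only [Z, patch_patch]
  calc ∑ ω, X.indicator w (patch Δ ω x) * gammaFn d X f Λ S (patch Δ ω x) n
      = ∑ ω, ∑ η, X.indicator w (patch Δ ω x) / Z (patch Δ ω x) *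
          (Subtype.val '' S).indicator w (patch Λ η (patch Δ ω x)) := by
        refine sum_congr rfl fun ω _ => ?_
        rw [← mul_sum, div_mul_eq_mul_div, mul_div_assoc]
        rfl
    _ = ∑ ω, ∑ η, X.indicator w (patch Λ η (patch Δ ω x)) / Z (patch Λ η (patch Δ ω x)) *
          (Subtype.val '' S).indicator w (patch Δ ω x) :=
        sum_sum_patch_comm hΛΔ x fun a b =>
          X.indicator w a / Z a * (Subtype.val '' S).indicator w b
    _ = ∑ ω, (Subtype.val '' S).indicator w (patch Δ ω x) := by
        refine sum_congr rfl fun ω _ => ?_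
        simp_rw [hZ, ← sum_mul, ← sum_div]
        by_cases h : patch Δ ω x ∈ Subtype.val '' S
        · have hX : patch Δ ω x ∈ X := Subtype.coe_image_subset X S h
          rw [div_self (sum_indicator_patch_pos (fun _ => Real.exp_pos _) hX).ne', one_mul]
        · simp [Set.indicator_of_notMem h]

theorem gammaFn_preimage_singleton (x : Config d A) (ω : {k // k ∈ Δ} → A) (n : ℕ) :
    gammaFn d X f Δ (Subtype.val ⁻¹' {patch Δ ω x}) x n =
      X.indicator (fun z => Real.exp (fnSum d f n z)) (patch Δ ω x) /
        ∑ η : {k // k ∈ Δ} → A,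
          X.indicator (fun z => Real.exp (fnSum d f n z)) (patch Δ η x) := by
  rw [gammaFn, Subtype.image_preimage_coe, sum_eq_single ω]
  · by_cases h : patch Δ ω x ∈ X <;> simp [h]
  · exact fun ω' _ hω' => Set.indicator_of_notMem
      (fun h => hω' (patch_injective x h.2)) _
  · simp

theorem gammaFn_eq_sum (hΛΔ : Λ ⊆ Δ) (x : Config d A) (n : ℕ) :
    gammaFn d X f Δ S x n = ∑ ω : {k // k ∈ Δ} → A,
      gammaFn d X f Δ (Subtype.val ⁻¹' {patch Δ ω x}) x n *
        gammaFn d X f Λ S (patch Δ ω x) n := by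
  simp_rw [gammaFn_preimage_singleton, div_mul_eq_mul_div, ← sum_div,
    sum_indicator_mul_gammaFn hΛΔ]
  rfl

theorem gamma_eq_sum (hf : MemSV d X f) (hinv : ∀ k, ∀ x ∈ X, shift k x ∈ X) (hΛΔ : Λ ⊆ Δ)
    {x : Config d A} (hx : x ∈ X) (S : Set ↥X) :
    gamma d X f Δ S x = ∑ ω : {k // k ∈ Δ} → A,
      gamma d X f Δ (Subtype.val ⁻¹' {patch Δ ω x}) x * gamma d X f Λ S (patch Δ ω x) := by
  refine tendsto_nhds_unique (tendsto_gammaFn hf hinv hx S) ?_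
  rw [funext (gammaFn_eq_sum hΛΔ x)]
  refine tendsto_finsetSum _ fun ω _ => ?_
  by_cases hω : patch Δ ω x ∈ X
  · exact (tendsto_gammaFn hf hinv hx _).mul (tendsto_gammaFn hf hinv hω S)
  -- `γ_Λ(S|ω x_{Δᶜ})` need not converge off `X`, but then the weight of `ω` vanishes for all `n`.
  · have hempty (ω') : patch Δ ω' x ∉ Subtype.val '' (Subtype.val ⁻¹' {patch Δ ω x} : Set ↥X) :=
      fun ⟨z, hz, _⟩ => hω (hz ▸ z.2)
    simp only [gammaFn_eq_zero_of_forall_patch_notMem hempty,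
      gamma_eq_zero_of_forall_patch_notMem hempty, zero_mul]
    exact tendsto_const_nhds

end Kernel

theorem integral_eq_sum_of_ae_mem_iUnion {α ι : Type*} [MeasurableSpace α] [Fintype ι]
    {μ : Measure α} [IsFiniteMeasure μ] {P : ι → Set α} (hP : ∀ i, MeasurableSet (P i))
    (hdisj : Pairwise (Function.onFun Disjoint P)) (hcover : ∀ᵐ a ∂μ, a ∈ ⋃ i, P i) {g : α → ℝ}
    {c : ι → ℝ} (hg : ∀ i, ∀ a ∈ P i, g a = c i) :
    ∫ a, g a ∂μ = ∑ i, μ.real (P i) * c i := by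
  have hint : IntegrableOn g (⋃ i, P i) μ := integrableOn_finite_iUnion.2 fun i =>
    IntegrableOn.congr_fun integrableOn_const (fun a ha => (hg i a ha).symm) (hP i)
  conv_lhs => rw [← Measure.restrict_eq_self_of_ae_mem hcover]
  rw [integral_iUnion hP hdisj hint, tsum_fintype]
  refine sum_congr rfl fun i _ => ?_
  rw [setIntegral_congr_fun (hP i) (hg i), setIntegral_const, smul_eq_mul]

theorem gamma_consistency_general {d : ℕ} {A : Type*} [Fintype A]
    [TopologicalSpace A] [DiscreteTopology A] [MeasurableSpace A] [BorelSpace A]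
    (X : Set (Config d A))
    (hinv : ∀ k : Fin d → ℤ, ∀ x ∈ X, shift k x ∈ X)
    (f : Config d A → ℝ) (hf : MemSV d X f)
    (Λ Δ : Finset (Fin d → ℤ)) (hΛΔ : Λ ⊆ Δ)
    (x : Config d A) (hx : x ∈ X)
    (ν : Measure ↥X) (hνp : IsProbabilityMeasure ν)
    (hν : ∀ S : Set ↥X, MeasurableSet S → (ν S).toReal = gamma d X f Δ S x) :
    ∀ S : Set ↥X, MeasurableSet S →
      ∫ y, gamma d X f Λ S y.1 ∂ν = gamma d X f Δ S x := by
  intro S _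
  let P (ω : {k // k ∈ Δ} → A) : Set ↥X := Subtype.val ⁻¹' {patch Δ ω x}
  have hP (ω) : MeasurableSet (P ω) :=
    (measurableSet_singleton _).preimage measurable_subtype_coe
  have hdisj : Pairwise (Function.onFun Disjoint P) := fun ω ω' h =>
    (Set.disjoint_singleton.2 ((patch_injective x).ne h)).preimage _
  have hcover : ∀ᵐ z ∂ν, z ∈ ⋃ ω, P ω := by
    have hout : gamma d X f Δ (⋃ ω, P ω)ᶜ x = 0 :=
      gamma_eq_zero_of_forall_patch_notMem fun ω ⟨z, hz, hzω⟩ => hz (Set.mem_iUnion.2 ⟨ω, hzω⟩)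
    rw [ae_iff, ← measureReal_eq_zero_iff]
    exact (hν _ (MeasurableSet.iUnion hP).compl).trans hout
  rw [integral_eq_sum_of_ae_mem_iUnion hP hdisj hcover
      (c := fun ω => gamma d X f Λ S (patch Δ ω x)) fun ω z hz => congrArg _ hz,
    gamma_eq_sum hf hinv hΛΔ hx S]
  simp_rw [measureReal_def, hν _ (hP _)]
  rfl

/-- Consistency of the family `γ`: if `Λ ⊆ Δ` are nonempty finite sets,
then `∫ γ_Λ(S|y) γ_Δ(dy|x) = γ_Δ(S|x)` for every Borel `S` and every `x ∈ X`. -/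
theorem gamma_consistency {d : ℕ} (hd : 1 ≤ d) {A : Type*} [Fintype A] [Nonempty A]
    [TopologicalSpace A] [DiscreteTopology A] [MeasurableSpace A] [BorelSpace A]
    (X : Set (Config d A)) (hne : X.Nonempty) (hcl : IsClosed X)
    (hinv : ∀ k : Fin d → ℤ, ∀ x ∈ X, shift k x ∈ X)
    (f : Config d A → ℝ) (hf : MemSV d X f)
    (Λ Δ : Finset (Fin d → ℤ)) (hΛ : Λ.Nonempty) (hΔ : Δ.Nonempty) (hΛΔ : Λ ⊆ Δ)
    (x : Config d A) (hx : x ∈ X)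
    (ν : Measure ↥X) (hνp : IsProbabilityMeasure ν)
    (hν : ∀ S : Set ↥X, MeasurableSet S → (ν S).toReal = gamma d X f Δ S x) :
    ∀ S : Set ↥X, MeasurableSet S →
      ∫ y, gamma d X f Λ S y.1 ∂ν = gamma d X f Δ S x :=
  gamma_consistency_general X hinv f hf Λ Δ hΛΔ x hx ν hνp hν
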